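/- Let p* be the maximum entropy distribution subject to matching itemset frequencies of a strictly positive empirical distribution q_D over a downward closed family F, and let q be any distribution in the exponential model associated with F with parameters r. Then log p*(D) − log q(D) = |D| · KL(p* ‖ q) ≥ 0, where KL denotes Kullback–Leibler divergence. -/

import Mathlib

open scoped Classical

/-- A family of itemsets is downward closed if it is closed under taking subsets. -/
def DownwardClosed {A : Type*} (F : Finset (Finset A)) : Prop :=
  ∀ X ∈ F, ∀ Y ⊆ X, Y ∈ F

variable {K : ℕ}

/-- The frequency of itemset `X` under distribution `p`: the probability that all
items of `X` take value `true`. -/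
noncomputable def freq (p : (Fin K → Bool) → ℝ) (X : Finset (Fin K)) : ℝ :=
  ∑ t ∈ Finset.univ.filter (fun t : Fin K → Bool => ∀ i ∈ X, t i = true), p t

/-- `p` is a probability distribution on `{0,1}^K`. -/
def IsDist (p : (Fin K → Bool) → ℝ) : Prop :=
  (∀ t, 0 ≤ p t) ∧ ∑ t, p t = 1

/-- The empirical distribution of a dataset `D`. -/
noncomputable def empirical (D : Multiset (Fin K → Bool)) : (Fin K → Bool) → ℝ :=
  fun t => (D.count t : ℝ) / (Multiset.card D : ℝ)

/-- The likelihood of a dataset `D` under distribution `p`. -/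
noncomputable def likelihood (p : (Fin K → Bool) → ℝ) (D : Multiset (Fin K → Bool)) : ℝ :=
  (D.map p).prod

/-- The (Shannon) entropy of a distribution. -/
noncomputable def entropyDist (p : (Fin K → Bool) → ℝ) : ℝ :=
  -∑ t, p t * Real.log (p t)

/-- Indicator `S_X(t)`: 1 if transaction `t` covers itemset `X`, else 0. -/
def ind (X : Finset (Fin K)) (t : Fin K → Bool) : ℝ :=
  if ∀ i ∈ X, t i = true then 1 else 0

/-- `p` has the exponential form associated with family `F`. -/
def ExpForm (F : Finset (Finset (Fin K))) (p : (Fin K → Bool) → ℝ) : Prop :=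
  ∃ r : Finset (Fin K) → ℝ, ∀ t, p t = Real.exp (∑ X ∈ F, r X * ind X t)

/-- The exponential model associated with `F`: distributions of exponential form
together with all their limits. -/
def ExpModel (F : Finset (Finset (Fin K))) : Set ((Fin K → Bool) → ℝ) :=
  closure {p | ExpForm F p}

/-- `p` matches the frequencies of `q` on every itemset of `F`. -/
def Matches (F : Finset (Finset (Fin K))) (p q : (Fin K → Bool) → ℝ) : Prop :=
  ∀ X ∈ F, freq p X = freq q X

/-- The marginal probability under `p` of observing the values of `t` on the
coordinates of `X`. -/
noncomputable def marg (p : (Fin K → Bool) → ℝ) (X : Finset (Fin K)) (t : Fin K → Bool) : ℝ :=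
  ∑ s ∈ Finset.univ.filter (fun s : Fin K → Bool => ∀ i ∈ X, s i = t i), p s

/-- The empirical entropy of an itemset `X` under distribution `q`. -/
noncomputable def entropyOf (q : (Fin K → Bool) → ℝ) (X : Finset (Fin K)) : ℝ :=
  -∑ u : {i // i ∈ X} → Bool,
      (marg q X fun i => if h : i ∈ X then u ⟨i, h⟩ else false) *
        Real.log (marg q X fun i => if h : i ∈ X then u ⟨i, h⟩ else false)

/-- Kullback–Leibler divergence. -/
noncomputable def KLdiv (p q : (Fin K → Bool) → ℝ) : ℝ :=
  ∑ t, p t * Real.log (p t / q t)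

/-! For `p` of exponential form with parameters `r`, `log p(D) = |D| · ∑_{X ∈ F} r_X q_D(X = 1)`
depends on the data only through the frequencies of `F`. Since `p*` matches these frequencies,
`q_D` may be replaced by `p*`, turning `log p*(D) − log q(D)` into `|D|` times
`∑_t p*(t) (log p*(t) − log q(t)) = |D| · KL(p* ‖ q)`, which is nonnegative by Gibbs' inequality. -/

open Real

lemma mul_log_div_ge_sub {a b : ℝ} (ha : 0 ≤ a) (hb : 0 < b) : a - b ≤ a * log (a / b) := by
  rcases ha.eq_or_lt with rfl | ha
  · simpa using hb.le
  calc a - b = a * (1 - (a / b)⁻¹) := by field_simp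
    _ ≤ a * log (a / b) := by gcongr; exact one_sub_inv_le_log_of_pos (div_pos ha hb)

lemma sum_mul_log_div_nonneg {α : Type*} [Fintype α] {p q : α → ℝ} (hp : ∀ a, 0 ≤ p a)
    (hq : ∀ a, 0 < q a) (hsum : ∑ a, p a = ∑ a, q a) : 0 ≤ ∑ a, p a * log (p a / q a) :=
  calc (0 : ℝ) = ∑ a, (p a - q a) := by rw [Finset.sum_sub_distrib, hsum, sub_self]
    _ ≤ ∑ a, p a * log (p a / q a) :=
      Finset.sum_le_sum fun a _ => mul_log_div_ge_sub (hp a) (hq a)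

lemma KLdiv_nonneg {p q : (Fin K → Bool) → ℝ} (hp : ∀ t, 0 ≤ p t) (hq : ∀ t, 0 < q t)
    (hsum : ∑ t, p t = ∑ t, q t) : 0 ≤ KLdiv p q :=
  sum_mul_log_div_nonneg hp hq hsum

lemma KLdiv_eq_sub {p q : (Fin K → Bool) → ℝ} (hp : ∀ t, 0 < p t) (hq : ∀ t, 0 < q t) :
    KLdiv p q = ∑ t, p t * log (p t) - ∑ t, p t * log (q t) := by
  rw [KLdiv, ← Finset.sum_sub_distrib]
  refine Finset.sum_congr rfl fun t _ => ?_
  rw [log_div (hp t).ne' (hq t).ne', mul_sub]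

lemma ExpForm.pos {F : Finset (Finset (Fin K))} {p : (Fin K → Bool) → ℝ} (h : ExpForm F p)
    (t : Fin K → Bool) : 0 < p t := by
  obtain ⟨r, hr⟩ := h
  exact hr t ▸ exp_pos _

lemma freq_eq_sum_mul_ind (p : (Fin K → Bool) → ℝ) (X : Finset (Fin K)) :
    freq p X = ∑ t, p t * ind X t := by
  rw [freq, Finset.sum_filter]
  refine Finset.sum_congr rfl fun t _ => ?_
  unfold ind
  split_ifs <;> simp

lemma sum_mul_log_eq_of_expForm {F : Finset (Finset (Fin K))} {r : Finset (Fin K) → ℝ}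
    {e : (Fin K → Bool) → ℝ} (he : ∀ t, e t = exp (∑ X ∈ F, r X * ind X t))
    (w : (Fin K → Bool) → ℝ) : ∑ t, w t * log (e t) = ∑ X ∈ F, r X * freq w X := by
  simp only [he, log_exp, Finset.mul_sum, freq_eq_sum_mul_ind]
  rw [Finset.sum_comm]
  exact Finset.sum_congr rfl fun X _ => Finset.sum_congr rfl fun t _ => by ring

lemma sum_mul_log_eq_of_matches {F : Finset (Finset (Fin K))} {p q e : (Fin K → Bool) → ℝ}
    (hm : Matches F p q) (he : ExpForm F e) :
    ∑ t, p t * log (e t) = ∑ t, q t * log (e t) := by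
  obtain ⟨r, hr⟩ := he
  rw [sum_mul_log_eq_of_expForm hr, sum_mul_log_eq_of_expForm hr]
  exact Finset.sum_congr rfl fun X hX => by rw [hm X hX]

lemma log_likelihood {p : (Fin K → Bool) → ℝ} (hp : ∀ t, 0 < p t) (D : Multiset (Fin K → Bool)) :
    log (likelihood p D) = ∑ t, (D.count t : ℝ) * log (p t) := by
  rw [likelihood, log_multiset_prod (by simpa using fun t _ => (hp t).ne'), Multiset.map_map,
    Finset.sum_multiset_map_count]
  refine Finset.sum_subset (Finset.subset_univ _) (fun t _ ht => ?_) |>.trans ?_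
  · simp [Multiset.count_eq_zero_of_notMem (by simpa using ht)]
  · simp [nsmul_eq_mul]

lemma natCast_count_eq_card_mul_empirical (D : Multiset (Fin K → Bool)) (t : Fin K → Bool) :
    (D.count t : ℝ) = Multiset.card D * empirical D t := by
  rcases eq_or_ne D 0 with rfl | hD
  · simp
  have : (Multiset.card D : ℝ) ≠ 0 := by simpa using hD
  rw [empirical, mul_div_cancel₀ _ this]

lemma log_likelihood_eq_card_mul {p : (Fin K → Bool) → ℝ} (hp : ∀ t, 0 < p t)
    (D : Multiset (Fin K → Bool)) :
    log (likelihood p D) = Multiset.card D * ∑ t, empirical D t * log (p t) := by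
  simp only [log_likelihood hp, natCast_count_eq_card_mul_empirical, Finset.mul_sum, mul_assoc]

theorem loglik_difference_is_kl_general (F : Finset (Finset (Fin K)))
    (D : Multiset (Fin K → Bool))
    (pstar : (Fin K → Bool) → ℝ)
    (hdist : IsDist pstar) (hmatch : Matches F pstar (empirical D))
    (hform : ExpForm F pstar)
    (q : (Fin K → Bool) → ℝ) (hq : IsDist q) (hqform : ExpForm F q) :
    Real.log (likelihood pstar D) - Real.log (likelihood q D) =
        (Multiset.card D : ℝ) * KLdiv pstar q ∧
      0 ≤ KLdiv pstar q := by
  have hppos := hform.pos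
  have hqpos := hqform.pos
  constructor
  · rw [log_likelihood_eq_card_mul hppos, log_likelihood_eq_card_mul hqpos,
      ← sum_mul_log_eq_of_matches hmatch hform, ← sum_mul_log_eq_of_matches hmatch hqform,
      KLdiv_eq_sub hppos hqpos, mul_sub]
  · exact KLdiv_nonneg (fun t => (hppos t).le) hqpos (hdist.2.trans hq.2.symm)

/-- Theorem: let `p*` be the maximum entropy distribution (of exponential form, with
parameters `r*`) subject to matching the itemset frequencies of the strictly positive
empirical distribution over a downward closed family `F`, and let `q` be any distribution
of exponential form associated with `F`.  Then
`log p*(D) − log q(D) = |D| · KL(p* ‖ q) ≥ 0`. -/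
theorem loglik_difference_is_kl (F : Finset (Finset (Fin K)))
    (hdc : DownwardClosed F) (hsing : ∀ i : Fin K, ({i} : Finset (Fin K)) ∈ F)
    (D : Multiset (Fin K → Bool)) (hD : D ≠ 0)
    (hpos : ∀ t, 0 < empirical D t)
    (pstar : (Fin K → Bool) → ℝ)
    (hdist : IsDist pstar) (hmatch : Matches F pstar (empirical D))
    (hform : ExpForm F pstar)
    (hmaxent : ∀ p : (Fin K → Bool) → ℝ, IsDist p → Matches F p (empirical D) →
      entropyDist p ≤ entropyDist pstar)
    (q : (Fin K → Bool) → ℝ) (hq : IsDist q) (hqform : ExpForm F q) :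
    Real.log (likelihood pstar D) - Real.log (likelihood q D) =
        (Multiset.card D : ℝ) * KLdiv pstar q ∧
      0 ≤ KLdiv pstar q :=
  loglik_difference_is_kl_general F D pstar hdist hmatch hform q hq hqform
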